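/- Let f: {-1,1}^d → {-1,1}^D be a correlation amplifier with parameters (d, D, p, τ, γ). If (γτ)^p ≤ 1/100 and p ≤ (log₂ e)·τ²d / (8 log₂(1/(γτ))), then D ≥ (1/5)·(1/(γτ))^p. -/
import Mathlib


/-- `f : {-1,1}^d → {-1,1}^D` is a correlation amplifier with parameters
`(d, D, p, τ, γ)`. -/
def IsCorrelationAmplifier (d D p : ℕ) (τ γ : ℝ)
    (f : (Fin d → ℤ) → (Fin D → ℤ)) : Prop :=
  (∀ x, (∀ u, x u = 1 ∨ x u = -1) → ∀ i, f x i = 1 ∨ f x i = -1) ∧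
  ∀ x y, (∀ u, x u = 1 ∨ x u = -1) → (∀ u, y u = 1 ∨ y u = -1) →
    ((|((∑ u, x u * y u : ℤ) : ℝ)| < τ * d →
        |((∑ i, f x i * f y i : ℤ) : ℝ)| ≤ (τ * γ) ^ p * D) ∧
     (τ * d ≤ |((∑ u, x u * y u : ℤ) : ℝ)| →
        (((∑ u, x u * y u : ℤ) : ℝ) / (γ * d)) ^ p * D
            ≤ ((∑ i, f x i * f y i : ℤ) : ℝ) ∧
        ((∑ i, f x i * f y i : ℤ) : ℝ)
            ≤ (γ * ((∑ u, x u * y u : ℤ) : ℝ) / d) ^ p * D))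

section AmplifierAux
open Finset Real


noncomputable section

def svec' (b : Bool) : ℤ := if b then 1 else -1

def svec {d : ℕ} (y : Fin d → Bool) : Fin d → ℤ := fun u => if y u then 1 else -1

lemma svec_pm {d : ℕ} (y : Fin d → Bool) : ∀ u, svec y u = 1 ∨ svec y u = -1 := by
  intro u; unfold svec; by_cases h : y u <;> simp [h]

lemma mgf {d : ℕ} (x : Fin d → ℤ) (hx : ∀ u, x u = 1 ∨ x u = -1) (t : ℝ) :
    ∑ y : Fin d → Bool, Real.exp (t * ((∑ u, x u * svec y u : ℤ) : ℝ))
      = (Real.exp t + Real.exp (-t)) ^ d := by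
  have h1 : ∀ y : Fin d → Bool, Real.exp (t * ((∑ u, x u * svec y u : ℤ) : ℝ))
      = ∏ u, Real.exp (t * ((x u * svec y u : ℤ) : ℝ)) := by
    intro y
    rw [← Real.exp_sum]
    congr 1
    push_cast
    rw [Finset.mul_sum]
  simp_rw [h1]
  have h2 := Finset.prod_univ_sum (fun _ : Fin d => (Finset.univ : Finset Bool))
    (fun u b => Real.exp (t * ((x u * svec' b : ℤ) : ℝ)))
  rw [Fintype.piFinset_univ] at h2
  have h3 : ∀ y : Fin d → Bool, ∀ u, svec y u = svec' (y u) := fun _ _ => rfl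
  simp_rw [h3]
  rw [← h2]
  have h4 : ∀ u : Fin d, ∑ j : Bool, Real.exp (t * ((x u * svec' j : ℤ) : ℝ))
      = Real.exp t + Real.exp (-t) := by
    intro u; rcases hx u with h | h <;> simp [h, svec'] <;> push_cast <;> ring_nf <;>
      rw [add_comm]
  rw [Finset.prod_congr rfl (fun u _ => h4 u)]
  simp

lemma cosh_bound {τ : ℝ} (hτ0 : 0 < τ) (hτ1 : τ ≤ 1) :
    Real.exp (τ/2) + Real.exp (-(τ/2)) ≤ 2 * Real.exp (3 * τ^2 / 8) := by
  set s := τ/2 with hs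
  have hs0 : 0 < s := by positivity
  have hs1 : s ≤ 1/2 := by simp [hs]; linarith
  have habs : |s| ≤ 1 := by rw [abs_of_pos hs0]; linarith
  have habs' : |(-s)| ≤ 1 := by rw [abs_neg]; exact habs
  have h1 := Real.exp_bound habs (by norm_num : (0:ℕ) < 4)
  have h2 := Real.exp_bound habs' (by norm_num : (0:ℕ) < 4)
  rw [abs_of_pos hs0] at h1
  rw [abs_neg, abs_of_pos hs0] at h2
  have e1 : Real.exp s ≤ (1 + s + s^2/2 + s^3/6) + s^4 * (5/96) := by
    have := (abs_sub_le_iff.1 h1).1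
    have hsum : ∑ m ∈ Finset.range 4, s ^ m / (m.factorial : ℝ)
        = 1 + s + s^2/2 + s^3/6 := by
      simp [Finset.sum_range_succ, Nat.factorial]; try ring
    rw [hsum] at this
    norm_num [Nat.factorial] at this
    linarith [this]
  have e2 : Real.exp (-s) ≤ (1 - s + s^2/2 - s^3/6) + s^4 * (5/96) := by
    have := (abs_sub_le_iff.1 h2).1
    have hsum : ∑ m ∈ Finset.range 4, (-s) ^ m / (m.factorial : ℝ)
        = 1 - s + s^2/2 - s^3/6 := by
      simp [Finset.sum_range_succ, Nat.factorial]; try ring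
    rw [hsum] at this
    norm_num [Nat.factorial] at this
    linarith [this]
  have e3 : (1:ℝ) + 3 * τ^2/8 ≤ Real.exp (3 * τ^2/8) := by
    have := Real.add_one_le_exp (3 * τ^2/8); linarith
  have hsq : s^2 ≤ 1 := by nlinarith
  have hs2 : s^4 ≤ s^2 := by nlinarith [sq_nonneg s, sq_nonneg (s*s)]
  rw [hs] at *
  nlinarith [e1, e2, e3]


lemma tail_bound {d : ℕ} (x : Fin d → ℤ) (hx : ∀ u, x u = 1 ∨ x u = -1)
    {τ : ℝ} (hτ0 : 0 < τ) (hτ1 : τ ≤ 1) :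
    ((Finset.univ.filter (fun y : Fin d → Bool =>
        τ * d ≤ |((∑ u, x u * svec y u : ℤ) : ℝ)|)).card : ℝ)
      ≤ 2 ^ (d+1) * Real.exp (-(τ^2 * d) / 8) := by
  set t := τ/2 with ht
  have ht0 : 0 < t := by positivity
  set ip : (Fin d → Bool) → ℝ := fun y => ((∑ u, x u * svec y u : ℤ) : ℝ) with hip
  set F := Finset.univ.filter (fun y : Fin d → Bool => τ * d ≤ |ip y|) with hF
  have hterm : ∀ y ∈ F, Real.exp (t * (τ * d))
      ≤ Real.exp (t * ip y) + Real.exp ((-t) * ip y) := by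
    intro y hy
    have h1 : τ * d ≤ |ip y| := (Finset.mem_filter.1 hy).2
    have h2 : Real.exp (t * (τ * d)) ≤ Real.exp (t * |ip y|) :=
      Real.exp_le_exp.2 (by nlinarith)
    rcases abs_cases (ip y) with ⟨he, _⟩ | ⟨he, _⟩
    · rw [he] at h2
      have := Real.exp_pos ((-t) * ip y)
      linarith
    · rw [he] at h2
      have := Real.exp_pos (t * ip y)
      rw [show t * -ip y = (-t) * ip y by ring] at h2
      linarith
  have hsum1 : (F.card : ℝ) * Real.exp (t * (τ * d))
      ≤ ∑ y ∈ F, (Real.exp (t * ip y) + Real.exp ((-t) * ip y)) := by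
    calc (F.card : ℝ) * Real.exp (t * (τ * d))
        = ∑ _y ∈ F, Real.exp (t * (τ * d)) := by
          rw [Finset.sum_const, nsmul_eq_mul]
      _ ≤ _ := Finset.sum_le_sum hterm
  have hsum2 : ∑ y ∈ F, (Real.exp (t * ip y) + Real.exp ((-t) * ip y))
      ≤ ∑ y : Fin d → Bool, (Real.exp (t * ip y) + Real.exp ((-t) * ip y)) :=
    Finset.sum_le_sum_of_subset_of_nonneg (Finset.subset_univ F)
      (fun y _ _ => by positivity)
  have hsum3 : ∑ y : Fin d → Bool, (Real.exp (t * ip y) + Real.exp ((-t) * ip y))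
      = 2 * (Real.exp t + Real.exp (-t)) ^ d := by
    rw [Finset.sum_add_distrib, mgf x hx t, mgf x hx (-t)]
    rw [neg_neg]; ring
  have hcosh := cosh_bound hτ0 hτ1
  have hpow : (Real.exp t + Real.exp (-t)) ^ d ≤ (2 * Real.exp (3 * τ^2 / 8)) ^ d :=
    pow_le_pow_left₀ (by positivity) hcosh d
  have hcard : (F.card : ℝ) * Real.exp (t * (τ * d))
      ≤ 2 * (2 * Real.exp (3 * τ^2 / 8)) ^ d := by
    calc (F.card : ℝ) * Real.exp (t * (τ * d)) ≤ _ := hsum1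
      _ ≤ _ := hsum2
      _ = _ := hsum3
      _ ≤ 2 * (2 * Real.exp (3 * τ^2 / 8)) ^ d := by linarith
  have hrhs : 2 * (2 * Real.exp (3 * τ^2 / 8)) ^ d
      = 2 ^ (d+1) * Real.exp (-(τ^2 * d) / 8) * Real.exp (t * (τ * d)) := by
    have hexp : Real.exp ((d:ℝ) * (3*τ^2/8)) = Real.exp (-(τ^2*d)/8 + t*(τ*d)) := by
      rw [ht]; ring_nf
    rw [mul_pow, ← Real.exp_nat_mul, hexp, Real.exp_add, pow_succ]; ring
  rw [hrhs] at hcard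
  have := Real.exp_pos (t * (τ * d))
  calc (F.card : ℝ) ≤ 2 ^ (d+1) * Real.exp (-(τ^2 * d) / 8) := by
        by_contra hc
        push_neg at hc
        have : 2 ^ (d+1) * Real.exp (-(τ^2 * d) / 8) * Real.exp (t * (τ * d))
            < (F.card : ℝ) * Real.exp (t * (τ * d)) := by
          apply mul_lt_mul_of_pos_right hc this
        linarith

lemma trace_ineq {D : ℕ} {ι : Type*} (S : Finset ι) (V : ι → Fin D → ℝ) :
    (∑ i ∈ S, ∑ k, V i k ^ 2) ^ 2
      ≤ D * ∑ i ∈ S, ∑ j ∈ S, (∑ k, V i k * V j k) ^ 2 := by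
  set M : Fin D → Fin D → ℝ := fun k l => ∑ i ∈ S, V i k * V i l with hM
  have step1 : ∑ i ∈ S, ∑ k, V i k ^ 2 = ∑ k, M k k := by
    rw [Finset.sum_comm]
    refine Finset.sum_congr rfl fun k _ => Finset.sum_congr rfl fun i _ => sq (V i k) ▸ by rw [sq]
  have step2 : (∑ k, M k k) ^ 2 ≤ D * ∑ k, (M k k) ^ 2 := by
    have := sq_sum_le_card_mul_sum_sq (s := (Finset.univ : Finset (Fin D)))
      (f := fun k => M k k)
    simpa using this
  have step3 : ∑ k, (M k k) ^ 2 ≤ ∑ k, ∑ l, (M k l) ^ 2 := by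
    refine Finset.sum_le_sum fun k _ => ?_
    exact Finset.single_le_sum (f := fun l => (M k l)^2)
      (fun l _ => sq_nonneg _) (Finset.mem_univ k)
  have step4 : ∑ k, ∑ l, (M k l) ^ 2 = ∑ i ∈ S, ∑ j ∈ S, (∑ k, V i k * V j k) ^ 2 := by
    have lhs_eq : ∑ k, ∑ l, (M k l) ^ 2
        = ∑ p ∈ Finset.univ ×ˢ Finset.univ, ∑ q ∈ S ×ˢ S,
            (V q.1 p.1 * V q.1 p.2) * (V q.2 p.1 * V q.2 p.2) := by
      rw [← Finset.sum_product']
      refine Finset.sum_congr rfl fun p _ => ?_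
      rw [sq, hM, Finset.sum_mul_sum, ← Finset.sum_product']
    have rhs_eq : ∑ i ∈ S, ∑ j ∈ S, (∑ k, V i k * V j k) ^ 2
        = ∑ q ∈ S ×ˢ S, ∑ p ∈ Finset.univ ×ˢ Finset.univ,
            (V q.1 p.1 * V q.1 p.2) * (V q.2 p.1 * V q.2 p.2) := by
      rw [← Finset.sum_product']
      refine Finset.sum_congr rfl fun q _ => ?_
      rw [sq, Finset.sum_mul_sum, ← Finset.sum_product']
      refine Finset.sum_congr rfl fun p _ => ?_
      ring
    rw [lhs_eq, rhs_eq, Finset.sum_comm]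
  calc (∑ i ∈ S, ∑ k, V i k ^ 2) ^ 2 = (∑ k, M k k) ^ 2 := by rw [step1]
    _ ≤ D * ∑ k, (M k k) ^ 2 := step2
    _ ≤ D * ∑ k, ∑ l, (M k l) ^ 2 := by
        have hD0 : (0:ℝ) ≤ D := Nat.cast_nonneg D
        exact mul_le_mul_of_nonneg_left step3 hD0
    _ = _ := by rw [step4]

lemma packing {d : ℕ} (hd : 0 < d) {τ : ℝ} (hτ0 : 0 < τ) (hτ1 : τ ≤ 1) :
    ∃ S : Finset (Fin d → Bool),
      (∀ y ∈ S, ∀ z ∈ S, y ≠ z →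
          |((∑ u, svec y u * svec z u : ℤ) : ℝ)| < τ * d) ∧
      ((2:ℝ) ^ d ≤ S.card * (2 ^ (d+1) * Real.exp (-(τ^2 * d) / 8))) := by
  classical
  set Good : Finset (Fin d → Bool) → Prop := fun T => ∀ y ∈ T, ∀ z ∈ T, y ≠ z →
      |((∑ u, svec y u * svec z u : ℤ) : ℝ)| < τ * d with hGood
  set 𝒯 := (Finset.univ : Finset (Fin d → Bool)).powerset.filter Good with h𝒯
  have hemp : (∅ : Finset (Fin d → Bool)) ∈ 𝒯 := by
    simp [h𝒯, hGood]
  obtain ⟨S, hS𝒯, hSmax⟩ := Finset.exists_max_image 𝒯 Finset.card ⟨∅, hemp⟩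
  have hSgood : Good S := (Finset.mem_filter.1 hS𝒯).2
  have hself : ∀ y : Fin d → Bool, ((∑ u, svec y u * svec y u : ℤ) : ℝ) = d := by
    intro y
    have : ∀ u, svec y u * svec y u = 1 := by
      intro u; rcases svec_pm y u with h | h <;> simp [h]
    simp [this]
  have hsymm : ∀ y z : Fin d → Bool,
      (∑ u, svec y u * svec z u : ℤ) = (∑ u, svec z u * svec y u : ℤ) := by
    intro y z; exact Finset.sum_congr rfl fun u _ => mul_comm _ _
  -- every point is covered by some ball
  have hcover : ∀ y : Fin d → Bool, ∃ s ∈ S,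
      τ * d ≤ |((∑ u, svec s u * svec y u : ℤ) : ℝ)| := by
    intro y
    by_contra hcon
    push_neg at hcon
    have hyS : y ∉ S := by
      intro hyS
      have := hcon y hyS
      rw [hself y] at this
      have hdd : τ * d ≤ |(d:ℝ)| := by
        rw [abs_of_nonneg (by positivity)]
        have : (1:ℝ) ≤ d := by exact_mod_cast hd
        nlinarith
      linarith
    have hgood' : Good (insert y S) := by
      intro a ha b hb hab
      rcases Finset.mem_insert.1 ha with rfl | haS
      · rcases Finset.mem_insert.1 hb with rfl | hbS
        · exact absurd rfl hab
        · rw [show (∑ u, svec a u * svec b u : ℤ) = (∑ u, svec b u * svec a u : ℤ) from hsymm a b]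
          exact hcon b hbS
      · rcases Finset.mem_insert.1 hb with rfl | hbS
        · exact hcon a haS
        · exact hSgood a haS b hbS hab
    have hmem : insert y S ∈ 𝒯 := by
      rw [h𝒯, Finset.mem_filter]
      exact ⟨Finset.mem_powerset.2 (Finset.subset_univ _), hgood'⟩
    have := hSmax _ hmem
    rw [Finset.card_insert_of_notMem hyS] at this
    omega
  -- counting
  have hsub : (Finset.univ : Finset (Fin d → Bool)) ⊆
      S.biUnion (fun s => Finset.univ.filter (fun y : Fin d → Bool =>
        τ * d ≤ |((∑ u, svec s u * svec y u : ℤ) : ℝ)|)) := by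
    intro y _
    obtain ⟨s, hsS, hs⟩ := hcover y
    exact Finset.mem_biUnion.2 ⟨s, hsS, Finset.mem_filter.2 ⟨Finset.mem_univ _, hs⟩⟩
  have hcount : (2:ℕ) ^ d ≤ ∑ s ∈ S, (Finset.univ.filter (fun y : Fin d → Bool =>
      τ * d ≤ |((∑ u, svec s u * svec y u : ℤ) : ℝ)|)).card := by
    calc (2:ℕ)^d = (Finset.univ : Finset (Fin d → Bool)).card := by simp
      _ ≤ _ := le_trans (Finset.card_le_card hsub) (Finset.card_biUnion_le)
  have hreal : ((2:ℝ)) ^ d ≤ ∑ s ∈ S, ((Finset.univ.filter (fun y : Fin d → Bool =>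
      τ * d ≤ |((∑ u, svec s u * svec y u : ℤ) : ℝ)|)).card : ℝ) := by
    have := hcount
    push_cast
    exact_mod_cast Nat.cast_le.2 this
  refine ⟨S, hSgood, ?_⟩
  calc (2:ℝ)^d ≤ _ := hreal
    _ ≤ ∑ _s ∈ S, (2:ℝ) ^ (d+1) * Real.exp (-(τ^2 * d) / 8) :=
        Finset.sum_le_sum fun s _ => tail_bound (svec s) (svec_pm s) hτ0 hτ1
    _ = S.card * (2 ^ (d+1) * Real.exp (-(τ^2 * d) / 8)) := by
        rw [Finset.sum_const, nsmul_eq_mul]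


theorem amplifier_aux (d D p : ℕ)
    (hd : 0 < d) (hp : 0 < p) (hpe : Even p) (hD : 0 < D) (τ γ : ℝ)
    (hτ0 : 0 < τ) (hτ1 : τ ≤ 1) (hγ : 1 ≤ γ)
    (f : (Fin d → ℤ) → (Fin D → ℤ))
    (hf : (∀ x, (∀ u, x u = 1 ∨ x u = -1) → ∀ i, f x i = 1 ∨ f x i = -1) ∧
  ∀ x y, (∀ u, x u = 1 ∨ x u = -1) → (∀ u, y u = 1 ∨ y u = -1) →
    ((|((∑ u, x u * y u : ℤ) : ℝ)| < τ * d →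
        |((∑ i, f x i * f y i : ℤ) : ℝ)| ≤ (τ * γ) ^ p * D) ∧
     (τ * d ≤ |((∑ u, x u * y u : ℤ) : ℝ)| →
        (((∑ u, x u * y u : ℤ) : ℝ) / (γ * d)) ^ p * D
            ≤ ((∑ i, f x i * f y i : ℤ) : ℝ) ∧
        ((∑ i, f x i * f y i : ℤ) : ℝ)
            ≤ (γ * ((∑ u, x u * y u : ℤ) : ℝ) / d) ^ p * D)))
    (hsmall : (γ * τ) ^ p ≤ 1 / 100)
    (hplim : (p : ℝ) ≤ Real.logb 2 (Real.exp 1) * τ ^ 2 * d /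
      (8 * Real.logb 2 (1 / (γ * τ)))) :
    (1 / 5) * (1 / (γ * τ)) ^ p ≤ (D : ℝ) := by
  classical
  set ε : ℝ := (γ * τ) ^ p with hε
  have hγτ0 : 0 < γ * τ := by positivity
  have hε0 : 0 < ε := by positivity
  have hεs : ε ≤ 1 / 100 := hsmall
  have hγτ1 : γ * τ < 1 := by
    by_contra hc
    push_neg at hc
    have h1 : (1:ℝ) ≤ (γ * τ) ^ p := one_le_pow₀ hc
    rw [← hε] at h1
    linarith
  -- Step 1 : (1/(γτ))^p ≤ exp (τ²d/8)
  have hL0 : 0 < Real.log (1 / (γ * τ)) := by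
    apply Real.log_pos
    rw [lt_div_iff₀ hγτ0, one_mul]
    exact hγτ1
  set L := Real.log (1 / (γ * τ)) with hLdef
  have hlog2 : (0:ℝ) < Real.log 2 := Real.log_pos (by norm_num)
  have hplim' : (p : ℝ) * L ≤ τ ^ 2 * d / 8 := by
    have heq : Real.logb 2 (Real.exp 1) * τ ^ 2 * d / (8 * Real.logb 2 (1 / (γ * τ)))
        = τ ^ 2 * d / (8 * L) := by
      rw [Real.logb, Real.logb, Real.log_exp, ← hLdef]
      field_simp
    rw [heq] at hplim
    have h8L : 0 < 8 * L := by linarith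
    rw [le_div_iff₀ h8L] at hplim
    nlinarith
  have hinv : (1 / (γ * τ)) ^ p ≤ Real.exp (τ ^ 2 * d / 8) := by
    have h1 : (1 / (γ * τ)) ^ p = Real.exp ((p : ℝ) * L) := by
      rw [Real.exp_nat_mul, Real.exp_log (by positivity)]
    rw [h1]
    exact Real.exp_le_exp.2 hplim'
  have hinvε : (1 / (γ * τ)) ^ p = 1 / ε := by
    rw [div_pow, one_pow, hε]
  -- Step 2 : packing
  obtain ⟨S, hSgood, hScard⟩ := packing hd hτ0 hτ1
  set n : ℝ := (S.card : ℝ) with hn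
  have hn0 : (0:ℝ) ≤ n := Nat.cast_nonneg _
  have hN2 : Real.exp (τ ^ 2 * d / 8) ≤ 2 * n := by
    have h2d : (0:ℝ) < 2 ^ d := by positivity
    have hE : (0:ℝ) < Real.exp (-(τ ^ 2 * d) / 8) := Real.exp_pos _
    have h1 : (1:ℝ) ≤ 2 * n * Real.exp (-(τ ^ 2 * d) / 8) := by
      have : (2:ℝ) ^ d * 1 ≤ 2 ^ d * (2 * n * Real.exp (-(τ ^ 2 * d) / 8)) := by
        rw [mul_one]
        calc (2:ℝ) ^ d ≤ n * (2 ^ (d + 1) * Real.exp (-(τ ^ 2 * d) / 8)) := hScard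
          _ = 2 ^ d * (2 * n * Real.exp (-(τ ^ 2 * d) / 8)) := by rw [pow_succ]; ring
      exact le_of_mul_le_mul_left this h2d
    have h2 : Real.exp (τ ^ 2 * d / 8) * 1
        ≤ Real.exp (τ ^ 2 * d / 8) * (2 * n * Real.exp (-(τ ^ 2 * d) / 8)) :=
      mul_le_mul_of_nonneg_left h1 (Real.exp_pos _).le
    calc Real.exp (τ ^ 2 * d / 8) = Real.exp (τ ^ 2 * d / 8) * 1 := (mul_one _).symm
      _ ≤ Real.exp (τ ^ 2 * d / 8) * (2 * n * Real.exp (-(τ ^ 2 * d) / 8)) := h2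
      _ = 2 * n * (Real.exp (τ ^ 2 * d / 8) * Real.exp (-(τ ^ 2 * d) / 8)) := by ring
      _ = 2 * n := by
          rw [← Real.exp_add, show τ ^ 2 * (d:ℝ) / 8 + -(τ ^ 2 * (d:ℝ)) / 8 = 0 by ring,
            Real.exp_zero, mul_one]
  have hNε : 1 ≤ 2 * n * ε := by
    have h1 : 1 / ε ≤ 2 * n := le_trans (hinvε ▸ hinv) hN2
    rw [div_le_iff₀ hε0] at h1
    linarith
  have hnpos : 0 < n := by nlinarith
  -- Step 3 : trace argument
  set V : (Fin d → Bool) → Fin D → ℝ := fun y k => ((f (svec y) k : ℤ) : ℝ) with hV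
  have hdiag : ∀ y : Fin d → Bool, ∑ k, V y k ^ 2 = D := by
    intro y
    have h1 : ∀ k, V y k ^ 2 = 1 := by
      intro k
      rcases hf.1 (svec y) (svec_pm y) k with h | h <;> simp [hV, h]
    simp [h1]
  have hcross : ∀ y ∈ S, ∀ z ∈ S, y ≠ z → (∑ k, V y k * V z k) ^ 2 ≤ (ε * D) ^ 2 := by
    intro y hy z hz hyz
    have hlt := hSgood y hy z hz hyz
    have h1 := (hf.2 (svec y) (svec z) (svec_pm y) (svec_pm z)).1 hlt
    have h2 : ∑ k, V y k * V z k = ((∑ i, f (svec y) i * f (svec z) i : ℤ) : ℝ) := by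
      push_cast
      rfl
    rw [h2]
    have h3 : (τ * γ) ^ p = ε := by rw [hε, mul_comm]
    rw [h3] at h1
    have h4 : |((∑ i, f (svec y) i * f (svec z) i : ℤ) : ℝ)| ≤ ε * D := h1
    calc ((∑ i, f (svec y) i * f (svec z) i : ℤ) : ℝ) ^ 2
        = |((∑ i, f (svec y) i * f (svec z) i : ℤ) : ℝ)| ^ 2 := (sq_abs _).symm
      _ ≤ (ε * D) ^ 2 := by
          apply pow_le_pow_left₀ (abs_nonneg _) h4
  have htrace := trace_ineq S V
  have hlhs : ∑ i ∈ S, ∑ k, V i k ^ 2 = n * D := by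
    rw [Finset.sum_congr rfl fun i _ => hdiag i, Finset.sum_const, nsmul_eq_mul, hn]
  have hrhs : ∑ i ∈ S, ∑ j ∈ S, (∑ k, V i k * V j k) ^ 2
      ≤ n * (D:ℝ) ^ 2 + n ^ 2 * (ε * D) ^ 2 := by
    have hbound : ∀ i ∈ S, ∀ j ∈ S, (∑ k, V i k * V j k) ^ 2
        ≤ (ε * D) ^ 2 + (if i = j then ((D:ℝ)) ^ 2 else 0) := by
      intro i hi j hj
      by_cases hij : i = j
      · subst hij
        rw [if_pos rfl]
        have : ∑ k, V i k * V i k = (D:ℝ) := by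
          rw [← hdiag i]
          exact Finset.sum_congr rfl fun k _ => (sq (V i k)) ▸ by rw [sq]
        rw [this]
        nlinarith [sq_nonneg (ε * (D:ℝ))]
      · simp only [if_neg hij, add_zero]
        exact hcross i hi j hj hij
    calc ∑ i ∈ S, ∑ j ∈ S, (∑ k, V i k * V j k) ^ 2
        ≤ ∑ i ∈ S, ∑ j ∈ S, ((ε * D) ^ 2 + (if i = j then ((D:ℝ)) ^ 2 else 0)) :=
          Finset.sum_le_sum fun i hi => Finset.sum_le_sum fun j hj => hbound i hi j hj
      _ = ∑ i ∈ S, (n * (ε * D) ^ 2 + (if i ∈ S then ((D:ℝ)) ^ 2 else 0)) := by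
          refine Finset.sum_congr rfl fun i hi => ?_
          rw [Finset.sum_add_distrib, Finset.sum_const, nsmul_eq_mul, Finset.sum_ite_eq S i
            (fun _ => ((D:ℝ)) ^ 2), ← hn]
      _ = ∑ _i ∈ S, (n * (ε * D) ^ 2 + ((D:ℝ)) ^ 2) := by
          refine Finset.sum_congr rfl fun i hi => by rw [if_pos hi]
      _ = n * (n * (ε * D) ^ 2 + ((D:ℝ)) ^ 2) := by
          rw [Finset.sum_const, nsmul_eq_mul, ← hn]
      _ = n * (D:ℝ) ^ 2 + n ^ 2 * (ε * D) ^ 2 := by ring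
  -- Step 4 : final arithmetic
  rw [hlhs] at htrace
  have hD0 : (0:ℝ) < (D:ℝ) := by exact_mod_cast hD
  have htr2 : (n * D) ^ 2 ≤ (D:ℝ) * (n * (D:ℝ) ^ 2 + n ^ 2 * (ε * D) ^ 2) :=
    le_trans htrace (mul_le_mul_of_nonneg_left hrhs (Nat.cast_nonneg D))
  have hkey : n ≤ (D:ℝ) + n * ε ^ 2 * (D:ℝ) := by
    have h1 : n * (n * (D:ℝ) ^ 2) ≤ ((D:ℝ) + n * ε ^ 2 * (D:ℝ)) * (n * (D:ℝ) ^ 2) := by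
      calc n * (n * (D:ℝ) ^ 2) = (n * D) ^ 2 := by ring
        _ ≤ (D:ℝ) * (n * (D:ℝ) ^ 2 + n ^ 2 * (ε * D) ^ 2) := htr2
        _ = ((D:ℝ) + n * ε ^ 2 * (D:ℝ)) * (n * (D:ℝ) ^ 2) := by ring
    exact le_of_mul_le_mul_right h1 (mul_pos hnpos (pow_pos hD0 2))
  have h5 : 1 + n * ε ^ 2 ≤ 5 * (n * ε) := by
    have ha : n * ε ^ 2 ≤ n * ε * (1 / 100) := by
      have hh : n * ε ^ 2 = ε * (n * ε) := by ring
      have hh2 : ε * (n * ε) ≤ (1 / 100) * (n * ε) :=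
        mul_le_mul_of_nonneg_right hεs (mul_nonneg hn0 hε0.le)
      rw [hh]; linarith
    have ha0 : 0 ≤ n * ε := mul_nonneg hn0 hε0.le
    linarith
  have h6 : n * 1 ≤ n * (5 * ε * (D:ℝ)) := by
    calc n * 1 = n := mul_one n
      _ ≤ (D:ℝ) + n * ε ^ 2 * (D:ℝ) := hkey
      _ = (D:ℝ) * (1 + n * ε ^ 2) := by ring
      _ ≤ (D:ℝ) * (5 * (n * ε)) := mul_le_mul_of_nonneg_left h5 hD0.le
      _ = n * (5 * ε * (D:ℝ)) := by ring
  have h7 : (1:ℝ) ≤ 5 * ε * D := le_of_mul_le_mul_left h6 hnpos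
  rw [hinvε, show (1:ℝ) / 5 * (1 / ε) = 1 / (5 * ε) by ring,
    div_le_iff₀ (by positivity : (0:ℝ) < 5 * ε)]
  linarith

end

end AmplifierAux

/-- Lower bound on the output dimension of any correlation amplifier:
if `(γτ)^p ≤ 1/100` and `p ≤ (log₂ e) τ² d / (8 log₂(1/(γτ)))`, then
`D ≥ (1/5)(1/(γτ))^p`. -/
theorem amplifier_output_dimension_lower_bound (d D p : ℕ)
    (hd : 0 < d) (hp : 0 < p) (hpe : Even p) (hD : 0 < D) (τ γ : ℝ)
    (hτ0 : 0 < τ) (hτ1 : τ ≤ 1) (hγ : 1 ≤ γ)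
    (f : (Fin d → ℤ) → (Fin D → ℤ))
    (hf : IsCorrelationAmplifier d D p τ γ f)
    (hsmall : (γ * τ) ^ p ≤ 1 / 100)
    (hplim : (p : ℝ) ≤ Real.logb 2 (Real.exp 1) * τ ^ 2 * d /
      (8 * Real.logb 2 (1 / (γ * τ)))) :
    (1 / 5) * (1 / (γ * τ)) ^ p ≤ (D : ℝ) := by
  exact amplifier_aux d D p hd hp hpe hD τ γ hτ0 hτ1 hγ f hf hsmall hplim
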